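/- Let D be a finite distributive lattice with exactly two coatoms α and β that are both join-reducible. Then there is no algebra A with Con(A) ≅ D such that, under this isomorphism, Princ(A) corresponds to J(D) ∪ {0, 1, α ∧ β}, provided D is planar (equivalently, provided J(D) contains no three-element antichain). -/

import Mathlib

set_option linter.unusedVariables false

/-- A general (finitary, one-sorted) algebra. -/
structure Alg : Type 1 where
  carrier : Type
  ι : Type
  arity : ι → ℕ
  ops : ∀ i : ι, (Fin (arity i) → carrier) → carrier

/-- A congruence of an algebra: an equivalence relation compatible with all operations. -/
def IsCong (A : Alg) (r : A.carrier → A.carrier → Prop) : Prop :=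
  Equivalence r ∧ ∀ (i : A.ι) (x y : Fin (A.arity i) → A.carrier),
    (∀ j, r (x j) (y j)) → r (A.ops i x) (A.ops i y)

/-- The congruences of an algebra `A`. -/
def AlgCon (A : Alg) : Type := {r : A.carrier → A.carrier → Prop // IsCong A r}

instance (A : Alg) : PartialOrder (AlgCon A) where
  le r s := ∀ a b, r.1 a b → s.1 a b
  le_refl r a b h := h
  le_trans r s t h1 h2 a b h := h2 a b (h1 a b h)
  le_antisymm r s h1 h2 := Subtype.ext (by
    funext a b
    exact propext ⟨h1 a b, h2 a b⟩)

instance (A : Alg) : InfSet (AlgCon A) where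
  sInf S := ⟨fun a b => ∀ r ∈ S, r.1 a b,
    ⟨⟨fun a r _ => r.2.1.refl a,
      fun h r hr => r.2.1.symm (h r hr),
      fun h1 h2 r hr => r.2.1.trans (h1 r hr) (h2 r hr)⟩,
     fun i x y h r hr => r.2.2 i x y (fun j => h j r hr)⟩⟩

instance (A : Alg) : CompleteLattice (AlgCon A) :=
  completeLatticeOfInf _ (fun S =>
    ⟨fun r hr a b h => h r hr, fun r hr a b h s hs => hr hs a b h⟩)

/-- The principal congruence generated by the pair `(a, b)`. -/
def algPrinc (A : Alg) (a b : A.carrier) : AlgCon A := sInf {r : AlgCon A | r.1 a b}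

/-- The set of principal congruences of `A`. -/
def AlgPrinc (A : Alg) : Set (AlgCon A) := {θ | ∃ a b, θ = algPrinc A a b}


/-! Label every pair `(x, y)` of `A` by `φ (con(x, y)) ∈ J(D) ∪ {⊥, ⊤, m}`, where `m = c₁ ⊓ c₂`.
Planarity makes the join-irreducibles below `c₁` but not below `c₂` a chain, with top `p`;
symmetrically we get `q`. Join-reducibility of the coatoms gives `m ≰ p`, `m ≰ q`, and
`p ⊔ q = ⊤` since no coatom lies above both. So a pair with label `≤ c₁` has label `≤ m` or
`≤ p`. Take `(e, f)` with label `m`: if `e ≡_m x ≡_p u` but `e ≢_m u`, then `(e, u)` and `(f, u)`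
both have labels `≤ p`, whence `m ≤ p`. Thus the `θ_m`-block of `e` is closed under
`θ_p ∨ θ_q = ⊤`, i.e. `m = ⊤`, which is absurd. -/

section Lattice

variable {α : Type*}

lemma exists_supIrred_le_not_le [SemilatticeSup α] [OrderBot α] [WellFoundedLT α] {a b : α}
    (h : ¬ a ≤ b) : ∃ j, SupIrred j ∧ j ≤ a ∧ ¬ j ≤ b := by
  obtain ⟨s, rfl, hs⟩ := exists_supIrred_decomposition a
  by_contra! hle
  exact h (Finset.sup_le fun j hj => hle j (hs hj) (Finset.le_sup (f := id) hj))

lemma not_supIrred_of_sup_eq [SemilatticeSup α] {a b c : α} (ha : a < c) (hb : b < c)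
    (hab : a ⊔ b = c) : ¬ SupIrred c :=
  fun hc => (hc.2 hab).elim ha.ne hb.ne

/-- The join-irreducibles below `a` but not below `b` form a chain when `J(α)` has no
three-element antichain: a third element comes from below `b` but not below `a`. -/
lemma exists_greatest_supIrred_le_not_le [Lattice α] [OrderBot α] [Finite α] {a b : α}
    (hab : ¬ a ≤ b) (hba : ¬ b ≤ a)
    (hplanar : ¬ ∃ p₀ p₁ p₂ : α, SupIrred p₀ ∧ SupIrred p₁ ∧ SupIrred p₂ ∧
      ¬ p₀ ≤ p₁ ∧ ¬ p₁ ≤ p₀ ∧ ¬ p₀ ≤ p₂ ∧ ¬ p₂ ≤ p₀ ∧ ¬ p₁ ≤ p₂ ∧ ¬ p₂ ≤ p₁) :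
    ∃ p, SupIrred p ∧ p ≤ a ∧ ¬ p ≤ b ∧ ∀ x, SupIrred x → x ≤ a → ¬ x ≤ b → x ≤ p := by
  set P : Set α := {x | SupIrred x ∧ x ≤ a ∧ ¬ x ≤ b}
  obtain ⟨p₀, hp₀⟩ := exists_supIrred_le_not_le hab
  obtain ⟨p, ⟨hpJ, hpa, hpb⟩, hpmax⟩ := P.toFinite.exists_maximalFor id P ⟨p₀, hp₀⟩
  refine ⟨p, hpJ, hpa, hpb, fun x hxJ hxa hxb => ?_⟩
  by_contra hxp
  have hpx : ¬ p ≤ x := fun h => hxp (hpmax ⟨hxJ, hxa, hxb⟩ h)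
  obtain ⟨r, hrJ, hrb, hra⟩ := exists_supIrred_le_not_le hba
  exact hplanar ⟨p, x, r, hpJ, hxJ, hrJ, hpx, hxp, fun h => hpb (h.trans hrb),
    fun h => hra (h.trans hpa), fun h => hxb (h.trans hrb), fun h => hra (h.trans hxa)⟩

lemma le_of_forall_supIrred_le [Lattice α] [OrderBot α] [Finite α] {a b : α}
    (h : ∀ j, SupIrred j → j ≤ a → j ≤ b) : a ≤ b := by
  by_contra hab
  obtain ⟨j, hjJ, hja, hjb⟩ := exists_supIrred_le_not_le hab
  exact hjb (h j hjJ hja)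

lemma le_or_le_of_mem_supIrred_union [Lattice α] [BoundedOrder α] {c c' m p x : α}
    (hc : c ≠ ⊤) (hm : m = c ⊓ c') (hp : ∀ j, SupIrred j → j ≤ c → ¬ j ≤ c' → j ≤ p)
    (hx : x ∈ {x | SupIrred x} ∪ {⊥, ⊤, m}) (hxc : x ≤ c) : x ≤ m ∨ x ≤ p := by
  subst hm
  rcases hx with hxJ | rfl | rfl | rfl
  · by_cases hxc' : x ≤ c'
    · exact .inl (le_inf hxc hxc')
    · exact .inr (hp x hxJ hxc hxc')
  · exact .inl bot_le
  · exact absurd (top_le_iff.1 hxc) hc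
  · exact .inl le_rfl

lemma not_inf_le_of_forall_supIrred_le [Lattice α] [OrderBot α] [Finite α] {a b p : α}
    (hpJ : SupIrred p) (hpa : p ≤ a) (hp : ∀ j, SupIrred j → j ≤ a → ¬ j ≤ b → j ≤ p)
    (ha : ¬ SupIrred a) : ¬ a ⊓ b ≤ p := by
  intro h
  have hap : a ≤ p := le_of_forall_supIrred_le fun j hjJ hja => by
    by_cases hjb : j ≤ b
    · exact (le_inf hja hjb).trans h
    · exact hp j hjJ hja hjb
  exact ha (le_antisymm hpa hap ▸ hpJ)

end Lattice

namespace AlgCon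

variable {A : Alg}

lemma rel_top (x y : A.carrier) : (⊤ : AlgCon A).1 x y := fun _ h => h.elim

lemma algPrinc_le_iff {x y : A.carrier} {θ : AlgCon A} : algPrinc A x y ≤ θ ↔ θ.1 x y :=
  ⟨fun h => h x y fun _ hr => hr, fun h _ _ hab => hab θ h⟩

lemma rel_ops_update (θ : AlgCon A) (i : A.ι) (x : Fin (A.arity i) → A.carrier)
    (j : Fin (A.arity i)) {c d : A.carrier} (h : θ.1 c d) :
    θ.1 (A.ops i (Function.update x j c)) (A.ops i (Function.update x j d)) :=
  θ.2.2 i _ _ fun k => by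
    rcases eq_or_ne k j with rfl | hk
    · simpa using h
    · simpa [hk] using θ.2.1.refl (x k)

/-- Change the arguments one at a time. -/
lemma rel_ops_of_rel_ops_update {T : A.carrier → A.carrier → Prop} (hrefl : ∀ a, T a a)
    (htrans : ∀ {a b c}, T a b → T b c → T a c)
    (hT : ∀ i x j c d, T c d →
      T (A.ops i (Function.update x j c)) (A.ops i (Function.update x j d)))
    (i : A.ι) {x y : Fin (A.arity i) → A.carrier} (h : ∀ j, T (x j) (y j)) :
    T (A.ops i x) (A.ops i y) := by
  classical
  suffices ∀ s : Finset (Fin (A.arity i)), T (A.ops i x) (A.ops i (s.piecewise y x)) by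
    simpa using this Finset.univ
  intro s
  induction s using Finset.induction_on with
  | empty => simpa using hrefl _
  | insert j s hj ih =>
    have hstep := hT i (s.piecewise y x) j (x j) (y j) (h j)
    rw [Function.update_eq_self_iff.2 (Finset.piecewise_eq_of_notMem _ _ _ hj).symm] at hstep
    rw [Finset.piecewise_insert]
    exact htrans ih hstep

lemma reflTransGen_of_rel_sup {θ ψ : AlgCon A} {x y : A.carrier} (h : (θ ⊔ ψ).1 x y) :
    Relation.ReflTransGen (fun a b => θ.1 a b ∨ ψ.1 a b) x y := by
  let χ : AlgCon A := ⟨Relation.ReflTransGen (fun a b => θ.1 a b ∨ ψ.1 a b),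
    ⟨⟨fun _ => .refl,
        fun h => Relation.ReflTransGen.mono (fun _ _ hab => Or.imp θ.2.1.symm ψ.2.1.symm hab) _ _
          (Relation.ReflTransGen.swap _ _ h),
        .trans⟩,
      rel_ops_of_rel_ops_update (fun _ => .refl) .trans fun i x j _ _ h =>
        Relation.ReflTransGen.lift (fun c => A.ops i (Function.update x j c))
          (fun _ _ hab => hab.imp (rel_ops_update θ i x j) (rel_ops_update ψ i x j)) _ _ h⟩⟩
  exact (sup_le (fun _ _ h => .single (.inl h)) (fun _ _ h => .single (.inr h)) : θ ⊔ ψ ≤ χ) x y h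

lemma eq_top_of_block_closed {μ π₁ π₂ : AlgCon A} (hπ : π₁ ⊔ π₂ = ⊤) {e : A.carrier}
    (hclosed : ∀ x u, μ.1 e x → π₁.1 x u ∨ π₂.1 x u → μ.1 e u) : μ = ⊤ := by
  have he : ∀ u, μ.1 e u := fun u => by
    induction reflTransGen_of_rel_sup (hπ ▸ rel_top e u) with
    | refl => exact μ.2.1.refl e
    | tail _ h ih => exact hclosed _ _ ih h
  exact top_unique fun x y _ => μ.2.1.trans (μ.2.1.symm (he x)) (he y)

/-- Otherwise both `(e, u)` and `(f, u)` are `π`-related, so `e ≡_π f`. -/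
lemma rel_of_rel_of_dichotomy {μ π α : AlgCon A} (hμ : μ ≤ α) (hπ : π ≤ α)
    (hdich : ∀ x y, α.1 x y → μ.1 x y ∨ π.1 x y) {e f x u : A.carrier} (hef : μ.1 e f)
    (hnef : ¬ π.1 e f) (hex : μ.1 e x) (hxu : π.1 x u) : μ.1 e u := by
  by_contra heu
  have heuα : α.1 e u := α.2.1.trans (hμ _ _ hex) (hπ _ _ hxu)
  have hfuα : α.1 f u := α.2.1.trans (hμ _ _ (μ.2.1.symm hef)) heuα
  have heuπ := (hdich e u heuα).resolve_left heu
  have hfuπ := (hdich f u hfuα).resolve_left fun h => heu (μ.2.1.trans hef h)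
  exact hnef (π.2.1.trans heuπ (π.2.1.symm hfuπ))

variable {D : Type*} [Lattice D] (φ : AlgCon A ≃o D)

lemma rel_symm_iff {s : D} {x y : A.carrier} :
    (φ.symm s).1 x y ↔ φ (algPrinc A x y) ≤ s :=
  algPrinc_le_iff.symm.trans φ.le_symm_apply

lemma rel_of_rel_of_labels [BoundedOrder D] {c c' m p : D} (hc : c ≠ ⊤) (hm : m = c ⊓ c')
    (hpc : p ≤ c) (hp : ∀ j, SupIrred j → j ≤ c → ¬ j ≤ c' → j ≤ p) (hmp : ¬ m ≤ p)
    (hlab : ∀ x y, φ (algPrinc A x y) ∈ {x | SupIrred x} ∪ {⊥, ⊤, m})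
    {e f : A.carrier} (hef : φ (algPrinc A e f) = m) {x u : A.carrier}
    (hex : (φ.symm m).1 e x) (hxu : (φ.symm p).1 x u) : (φ.symm m).1 e u :=
  rel_of_rel_of_dichotomy (α := φ.symm c) (φ.symm.monotone (hm ▸ inf_le_left))
    (φ.symm.monotone hpc)
    (fun x y h => by
      simp only [rel_symm_iff] at h ⊢
      exact le_or_le_of_mem_supIrred_union hc hm hp (hlab x y) h)
    ((rel_symm_iff φ).2 hef.le) (by rwa [rel_symm_iff, hef]) hex hxu

end AlgCon

/-- If a finite distributive lattice `D` has exactly two coatoms `c₁` and `c₂`,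
both join-reducible, and `J(D)` contains no three-element antichain (i.e. `D` is
planar), then no algebra represents the inclusion
`J(D) ∪ {⊥, ⊤, c₁ ⊓ c₂} ⊆ D` by principal congruences. -/
theorem stmt_17 {D : Type} [DistribLattice D] [Fintype D] [BoundedOrder D]
    (c₁ c₂ : D) (hne : c₁ ≠ c₂) (h₁ : IsCoatom c₁) (h₂ : IsCoatom c₂)
    (honly : ∀ x : D, IsCoatom x → x = c₁ ∨ x = c₂)
    (hred₁ : ∃ a b : D, a < c₁ ∧ b < c₁ ∧ a ⊔ b = c₁)
    (hred₂ : ∃ a b : D, a < c₂ ∧ b < c₂ ∧ a ⊔ b = c₂)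
    (hplanar : ¬ ∃ p₀ p₁ p₂ : D, SupIrred p₀ ∧ SupIrred p₁ ∧ SupIrred p₂ ∧
      ¬ p₀ ≤ p₁ ∧ ¬ p₁ ≤ p₀ ∧ ¬ p₀ ≤ p₂ ∧ ¬ p₂ ≤ p₀ ∧ ¬ p₁ ≤ p₂ ∧ ¬ p₂ ≤ p₁) :
    ¬ ∃ (A : Alg) (φ : AlgCon A ≃o D),
        (φ : AlgCon A → D) '' (AlgPrinc A) =
          {x : D | SupIrred x} ∪ {⊥, ⊤, c₁ ⊓ c₂} := by
  rintro ⟨A, φ, himg⟩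
  have hc₁₂ : ¬ c₁ ≤ c₂ := fun h => hne ((h₁.le_iff.1 h).resolve_left h₂.1).symm
  have hc₂₁ : ¬ c₂ ≤ c₁ := fun h => hne ((h₂.le_iff.1 h).resolve_left h₁.1)
  obtain ⟨p, hpJ, hpc₁, hpc₂, hp⟩ := exists_greatest_supIrred_le_not_le hc₁₂ hc₂₁ hplanar
  obtain ⟨q, hqJ, hqc₂, hqc₁, hq⟩ := exists_greatest_supIrred_le_not_le hc₂₁ hc₁₂ hplanar
  obtain ⟨a₁, b₁, ha₁, hb₁, hab₁⟩ := hred₁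
  obtain ⟨a₂, b₂, ha₂, hb₂, hab₂⟩ := hred₂
  have hmp := not_inf_le_of_forall_supIrred_le hpJ hpc₁ hp (not_supIrred_of_sup_eq ha₁ hb₁ hab₁)
  have hmq := inf_comm c₁ c₂ ▸
    not_inf_le_of_forall_supIrred_le hqJ hqc₂ hq (not_supIrred_of_sup_eq ha₂ hb₂ hab₂)
  have hpq : p ⊔ q = ⊤ := by
    rcases eq_top_or_exists_le_coatom (p ⊔ q) with h | ⟨c, hc, hle⟩
    · exact h
    rcases honly c hc with rfl | rfl
    · exact (hqc₁ (le_sup_right.trans hle)).elim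
    · exact (hpc₂ (le_sup_left.trans hle)).elim
  have hlab : ∀ x y, φ (algPrinc A x y) ∈ {x : D | SupIrred x} ∪ {⊥, ⊤, c₁ ⊓ c₂} :=
    fun x y => himg ▸ Set.mem_image_of_mem φ ⟨x, y, rfl⟩
  obtain ⟨_, ⟨e, f, rfl⟩, hef⟩ : c₁ ⊓ c₂ ∈ φ '' AlgPrinc A := himg ▸ by simp
  have hm : φ.symm (c₁ ⊓ c₂) = ⊤ :=
    AlgCon.eq_top_of_block_closed (by rw [← φ.symm.map_sup, hpq, φ.symm.map_top])
      fun x u hex => Or.rec (AlgCon.rel_of_rel_of_labels φ h₁.1 rfl hpc₁ hp hmp hlab hef hex)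
        (AlgCon.rel_of_rel_of_labels φ h₂.1 (inf_comm _ _) hqc₂ hq hmq hlab hef hex)
  exact h₁.1 (eq_top_mono inf_le_left (φ.symm.injective (hm.trans φ.symm.map_top.symm)))
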